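/- arXiv:1507.00631 — 6 statements merged into one kernel-verified Lean document; each statement's English description precedes it below -/
import Mathlib

section
/- Let f : ℝ → ℝ be a continuous function satisfying f(z₂) + e^{-z₂}·f(z₁) = f(z₁ + z₂) for all z₁, z₂ ∈ ℝ. Then there exists a constant K ∈ ℝ such that f(z) = K·(1 - e^{-z}) for all z ∈ ℝ. -/
/-! Swapping the two arguments of the equation leaves `f (z₁ + z₂)` unchanged, which forces
`f z₁ (1 - e^{-z₂}) = f z₂ (1 - e^{-z₁})`; evaluating at `z₂ = 1` makes `f` proportional to
`1 - e^{-z}`. -/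

theorem mul_one_sub_eq_mul_one_sub_of_add_eq {M R : Type*} [AddCommMagma M] [CommRing R]
    {f g : M → R} (h : ∀ x y, f y + g y * f x = f (x + y)) (x y : M) :
    f x * (1 - g y) = f y * (1 - g x) := by
  have hyx := h y x
  rw [add_comm y x] at hyx
  linear_combination hyx - h x y

theorem eq_div_mul_of_mul_eq_mul {α K : Type*} [Field K] {f c : α → K}
    (hfc : ∀ x y, f x * c y = f y * c x) {a : α} (ha : c a ≠ 0) (x : α) :
    f x = f a / c a * c x := by
  field_simp
  linear_combination hfc x a

theorem functional_eq_solution_general (f : ℝ → ℝ)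
    (h : ∀ z₁ z₂ : ℝ, f z₂ + Real.exp (-z₂) * f z₁ = f (z₁ + z₂)) :
    ∃ K : ℝ, ∀ z : ℝ, f z = K * (1 - Real.exp (-z)) := by
  have hne : 1 - Real.exp (-1) ≠ 0 :=
    sub_ne_zero.2 (Real.exp_lt_one_iff.2 (by norm_num)).ne'
  exact ⟨_, eq_div_mul_of_mul_eq_mul
    (mul_one_sub_eq_mul_one_sub_of_add_eq (g := fun z => Real.exp (-z)) h) hne⟩

theorem functional_eq_solution (f : ℝ → ℝ) (hf : Continuous f)
    (h : ∀ z₁ z₂ : ℝ, f z₂ + Real.exp (-z₂) * f z₁ = f (z₁ + z₂)) :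
    ∃ K : ℝ, ∀ z : ℝ, f z = K * (1 - Real.exp (-z)) :=
  functional_eq_solution_general f h
end

section
/- Fix a ∈ ℝ with a ≠ 0, and let G be the matrix group of all g(x₁,x₂,x₃,x₄) as above. The commutator of two elements satisfies g(x₁,x₂,x₃,x₄)⁻¹ g(y₁,y₂,y₃,y₄)⁻¹ g(x₁,x₂,x₃,x₄) g(y₁,y₂,y₃,y₄) ∈ { g(u,v,w,0) : u,v,w ∈ ℝ }; hence the commutator subgroup of G is contained in the abelian subgroup { g(u,v,w,0) }. -/
noncomputable def g (a x₁ x₂ x₃ x₄ : ℝ) : Matrix (Fin 4) (Fin 4) ℝ :=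
  !![Real.exp (a * x₄), 0, 0, x₁;
     0, Real.exp x₄, x₄ * Real.exp x₄, x₂;
     0, 0, Real.exp x₄, x₃;
     0, 0, 0, 1]

/-! The last coordinate is additive under multiplication, so every commutator has last
coordinate `0`; on that slice the product is plain addition of the first three coordinates. -/

lemma g_mul (a x₁ x₂ x₃ t y₁ y₂ y₃ s : ℝ) :
    g a x₁ x₂ x₃ t * g a y₁ y₂ y₃ s =
      g a (Real.exp (a * t) * y₁ + x₁)
        (Real.exp t * y₂ + t * Real.exp t * y₃ + x₂)
        (Real.exp t * y₃ + x₃) (t + s) := by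
  ext i j
  fin_cases i <;> fin_cases j <;>
    simp [g, Matrix.mul_apply, Fin.sum_univ_four, Real.exp_add, mul_add]
  ring

lemma g_zero_eq_one (a : ℝ) : g a 0 0 0 0 = 1 := by
  ext i j
  fin_cases i <;> fin_cases j <;> simp [g]

lemma g_inv (a x₁ x₂ x₃ t : ℝ) :
    (g a x₁ x₂ x₃ t)⁻¹ =
      g a (-(Real.exp (-(a * t)) * x₁))
        (t * Real.exp (-t) * x₃ - Real.exp (-t) * x₂)
        (-(Real.exp (-t) * x₃)) (-t) := by
  refine Matrix.inv_eq_left_inv ?_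
  rw [g_mul, ← g_zero_eq_one a]
  congr 1 <;> simp [Real.exp_neg]
  ring

lemma g_mul_of_last_eq_zero (a u v w u' v' w' : ℝ) :
    g a u v w 0 * g a u' v' w' 0 = g a (u + u') (v + v') (w + w') 0 := by
  rw [g_mul]
  congr 1 <;> simp <;> ring

theorem g_commutator_general (a : ℝ) :
    (∀ x₁ x₂ x₃ x₄ y₁ y₂ y₃ y₄ : ℝ,
      (g a x₁ x₂ x₃ x₄)⁻¹ * (g a y₁ y₂ y₃ y₄)⁻¹ * g a x₁ x₂ x₃ x₄ * g a y₁ y₂ y₃ y₄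
        ∈ {M | ∃ u v w : ℝ, M = g a u v w 0}) ∧
    (∀ u v w u' v' w' : ℝ,
      g a u v w 0 * g a u' v' w' 0 = g a u' v' w' 0 * g a u v w 0) := by
  constructor
  · intro x₁ x₂ x₃ x₄ y₁ y₂ y₃ y₄
    rw [g_inv, g_inv, g_mul, g_mul, g_mul]
    exact ⟨_, _, _, congrArg _ (by ring)⟩
  · intro u v w u' v' w'
    rw [g_mul_of_last_eq_zero, g_mul_of_last_eq_zero, add_comm u, add_comm v, add_comm w]

theorem g_commutator (a : ℝ) (ha : a ≠ 0) :
    (∀ x₁ x₂ x₃ x₄ y₁ y₂ y₃ y₄ : ℝ,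
      (g a x₁ x₂ x₃ x₄)⁻¹ * (g a y₁ y₂ y₃ y₄)⁻¹ * g a x₁ x₂ x₃ x₄ * g a y₁ y₂ y₃ y₄
        ∈ {M | ∃ u v w : ℝ, M = g a u v w 0}) ∧
    (∀ u v w u' v' w' : ℝ,
      g a u v w 0 * g a u' v' w' 0 = g a u' v' w' 0 * g a u v w 0) :=
  g_commutator_general a
end

section
/- Let 𝔤 be the Lie algebra with basis e₁,e₂,e₃,e₄ and brackets [e₁,e₄] = a·e₁, [e₂,e₄] = e₂, [e₃,e₄] = e₂ + e₃, with fixed a ∈ ℝ \ {0,1}. A linear map φ : 𝔤 → 𝔤 given by φ(e₁) = k·e₁, φ(e₂) = l·e₂, φ(e₃) = n·e₂ + l·e₃, φ(e₄) = f₁e₁ + f₂e₂ + f₃e₃ + e₄ with k·l ≠ 0 is a Lie algebra automorphism of 𝔤. -/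
def br (a : ℝ) (x y : Fin 4 → ℝ) : Fin 4 → ℝ :=
  ![a * (x 0 * y 3 - x 3 * y 0),
    (x 1 * y 3 - x 3 * y 1) + (x 2 * y 3 - x 3 * y 2),
    x 2 * y 3 - x 3 * y 2,
    0]

/-- The linear map φ(e₁)=k e₁, φ(e₂)=l e₂, φ(e₃)=n e₂ + l e₃,
φ(e₄)=f₁e₁+f₂e₂+f₃e₃+e₄ in coordinates. -/
def phi (k l n f₁ f₂ f₃ : ℝ) (v : Fin 4 → ℝ) : Fin 4 → ℝ :=
  ![k * v 0 + f₁ * v 3,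
    l * v 1 + n * v 2 + f₂ * v 3,
    l * v 2 + f₃ * v 3,
    v 3]

section

variable (k l n f₁ f₂ f₃ : ℝ)

theorem phi_smul_add (c : ℝ) (x y : Fin 4 → ℝ) :
    phi k l n f₁ f₂ f₃ (c • x + y) = c • phi k l n f₁ f₂ f₃ x + phi k l n f₁ f₂ f₃ y := by
  ext i
  fin_cases i <;> simp [phi] <;> ring

/-- Back substitution in the upper triangular system `phi v = w`, solved from the last
coordinate upwards. -/
noncomputable def phiInv (w : Fin 4 → ℝ) : Fin 4 → ℝ :=
  ![(w 0 - f₁ * w 3) / k,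
    (w 1 - n / l * (w 2 - f₃ * w 3) - f₂ * w 3) / l,
    (w 2 - f₃ * w 3) / l,
    w 3]

variable {k l}

theorem phiInv_phi (hk : k ≠ 0) (hl : l ≠ 0) :
    Function.LeftInverse (phiInv k l n f₁ f₂ f₃) (phi k l n f₁ f₂ f₃) := by
  intro v
  ext i
  fin_cases i <;> simp [phi, phiInv]
  all_goals field_simp
  all_goals ring

theorem phi_phiInv (hk : k ≠ 0) (hl : l ≠ 0) :
    Function.RightInverse (phiInv k l n f₁ f₂ f₃) (phi k l n f₁ f₂ f₃) := by
  intro w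
  ext i
  fin_cases i <;> simp [phi, phiInv]
  all_goals field_simp
  all_goals ring

theorem phi_bijective (hkl : k * l ≠ 0) : Function.Bijective (phi k l n f₁ f₂ f₃) := by
  obtain ⟨hk, hl⟩ := mul_ne_zero_iff.mp hkl
  exact ⟨(phiInv_phi n f₁ f₂ f₃ hk hl).injective, (phi_phiInv n f₁ f₂ f₃ hk hl).surjective⟩

variable (k l)

theorem phi_br (a : ℝ) (x y : Fin 4 → ℝ) :
    phi k l n f₁ f₂ f₃ (br a x y) = br a (phi k l n f₁ f₂ f₃ x) (phi k l n f₁ f₂ f₃ y) := by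
  ext i
  fin_cases i <;> simp [phi, br] <;> ring

end

theorem phi_automorphism_general (a : ℝ)
    (k l n f₁ f₂ f₃ : ℝ) (hkl : k * l ≠ 0) :
    -- φ is linear
    (∀ (c : ℝ) (x y : Fin 4 → ℝ),
      phi k l n f₁ f₂ f₃ (c • x + y) = c • phi k l n f₁ f₂ f₃ x + phi k l n f₁ f₂ f₃ y) ∧
    -- φ is bijective
    Function.Bijective (phi k l n f₁ f₂ f₃) ∧
    -- φ preserves the bracket
    (∀ x y : Fin 4 → ℝ,
      phi k l n f₁ f₂ f₃ (br a x y) = br a (phi k l n f₁ f₂ f₃ x) (phi k l n f₁ f₂ f₃ y)) :=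
  ⟨phi_smul_add k l n f₁ f₂ f₃, phi_bijective n f₁ f₂ f₃ hkl, phi_br k l n f₁ f₂ f₃ a⟩

theorem phi_automorphism (a : ℝ) (ha : a ≠ 0) (ha1 : a ≠ 1)
    (k l n f₁ f₂ f₃ : ℝ) (hkl : k * l ≠ 0) :
    -- φ is linear
    (∀ (c : ℝ) (x y : Fin 4 → ℝ),
      phi k l n f₁ f₂ f₃ (c • x + y) = c • phi k l n f₁ f₂ f₃ x + phi k l n f₁ f₂ f₃ y) ∧
    -- φ is bijective
    Function.Bijective (phi k l n f₁ f₂ f₃) ∧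
    -- φ preserves the bracket
    (∀ x y : Fin 4 → ℝ,
      phi k l n f₁ f₂ f₃ (br a x y) = br a (phi k l n f₁ f₂ f₃ x) (phi k l n f₁ f₂ f₃ y)) :=
  phi_automorphism_general a k l n f₁ f₂ f₃ hkl
end

section
/- Fix a ∈ ℝ, a ≠ 0, and a continuous function f : ℝ² → ℝ with f(0,0) = 0. Define a binary operation on ℝ³ by (x₁,y₁,z₁) * (x₂,y₂,z₂) = (x₁ + e^{a z₁} x₂, y₁ + y₂ e^{z₁} − z₂ e^{z₁} f(x₁,z₁), z₁ + z₂). Then (ℝ³, *) is a loop with identity (0,0,0): for all (a₁,a₂,a₃), (b₁,b₂,b₃) ∈ ℝ³, each of the equations (a₁,a₂,a₃) * y = (b₁,b₂,b₃) and x * (a₁,a₂,a₃) = (b₁,b₂,b₃) has a unique solution. -/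
/-!
Both translations are triangular in the coordinates `(z, x, y)`: the `z`-coordinate of a product
is a sum, and once it is fixed the other two coordinates are affine in the unknown with a
coefficient `e^{a z₁}` or `e^{z₁}`, which never vanishes. Solving coordinate by coordinate gives
explicit two-sided inverses of both translations.
-/

/-- The loop multiplication (x₁,y₁,z₁)*(x₂,y₂,z₂) =
(x₁ + e^{a z₁} x₂, y₁ + y₂ e^{z₁} − z₂ e^{z₁} f(x₁,z₁), z₁+z₂). -/
noncomputable def lmul (a : ℝ) (f : ℝ × ℝ → ℝ) (p q : ℝ × ℝ × ℝ) : ℝ × ℝ × ℝ :=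
  (p.1 + Real.exp (a * p.2.2) * q.1,
   p.2.1 + q.2.1 * Real.exp p.2.2 - q.2.2 * Real.exp p.2.2 * f (p.1, p.2.2),
   p.2.2 + q.2.2)

open Real

noncomputable def ldiv (a : ℝ) (f : ℝ × ℝ → ℝ) (p b : ℝ × ℝ × ℝ) : ℝ × ℝ × ℝ :=
  ((b.1 - p.1) / exp (a * p.2.2),
   (b.2.1 - p.2.1 + (b.2.2 - p.2.2) * exp p.2.2 * f (p.1, p.2.2)) / exp p.2.2,
   b.2.2 - p.2.2)

noncomputable def rdiv (a : ℝ) (f : ℝ × ℝ → ℝ) (b p : ℝ × ℝ × ℝ) : ℝ × ℝ × ℝ :=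
  let z := b.2.2 - p.2.2
  let x := b.1 - exp (a * z) * p.1
  (x, b.2.1 - p.2.1 * exp z + p.2.2 * exp z * f (x, z), z)

section

variable (a : ℝ) (f : ℝ × ℝ → ℝ)

theorem lmul_zero_left (hf0 : f (0, 0) = 0) (p : ℝ × ℝ × ℝ) : lmul a f (0, 0, 0) p = p := by
  simp [lmul, hf0]

theorem lmul_zero_right (p : ℝ × ℝ × ℝ) : lmul a f p (0, 0, 0) = p := by
  simp [lmul]

theorem lmul_ldiv (p b : ℝ × ℝ × ℝ) : lmul a f p (ldiv a f p b) = b := by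
  obtain ⟨b₁, b₂, b₃⟩ := b
  simp only [lmul, ldiv, Prod.mk.injEq]
  refine ⟨?_, ?_, by ring⟩ <;> field_simp <;> ring

theorem ldiv_lmul (p q : ℝ × ℝ × ℝ) : ldiv a f p (lmul a f p q) = q := by
  obtain ⟨q₁, q₂, q₃⟩ := q
  simp only [lmul, ldiv, Prod.mk.injEq]
  refine ⟨?_, ?_, by ring⟩ <;> field_simp <;> ring

theorem lmul_rdiv (b p : ℝ × ℝ × ℝ) : lmul a f (rdiv a f b p) p = b := by
  obtain ⟨b₁, b₂, b₃⟩ := b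
  simp only [lmul, rdiv, Prod.mk.injEq]
  refine ⟨by ring, by ring, by ring⟩

theorem rdiv_lmul (x p : ℝ × ℝ × ℝ) : rdiv a f (lmul a f x p) p = x := by
  obtain ⟨x₁, x₂, x₃⟩ := x
  have hz : x₃ + p.2.2 - p.2.2 = x₃ := by ring
  have hx : x₁ + exp (a * x₃) * p.1 - exp (a * x₃) * p.1 = x₁ := by ring
  simp only [lmul, rdiv, hz, hx, Prod.mk.injEq]
  refine ⟨trivial, by ring, trivial⟩

theorem bijective_lmul_left (p : ℝ × ℝ × ℝ) : Function.Bijective (lmul a f p) :=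
  Function.bijective_iff_has_inverse.mpr ⟨ldiv a f p, ldiv_lmul a f p, lmul_ldiv a f p⟩

theorem bijective_lmul_right (p : ℝ × ℝ × ℝ) : Function.Bijective (lmul a f · p) :=
  Function.bijective_iff_has_inverse.mpr
    ⟨(rdiv a f · p), (rdiv_lmul a f · p), (lmul_rdiv a f · p)⟩
end

theorem lmul_is_loop_general (a : ℝ) (f : ℝ × ℝ → ℝ)
    (hf0 : f (0, 0) = 0) :
    (∀ p : ℝ × ℝ × ℝ, lmul a f ((0,0,0) : ℝ × ℝ × ℝ) p = p) ∧
    (∀ p : ℝ × ℝ × ℝ, lmul a f p ((0,0,0) : ℝ × ℝ × ℝ) = p) ∧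
    (∀ p b : ℝ × ℝ × ℝ, ∃! y : ℝ × ℝ × ℝ, lmul a f p y = b) ∧
    (∀ p b : ℝ × ℝ × ℝ, ∃! x : ℝ × ℝ × ℝ, lmul a f x p = b) :=
  ⟨lmul_zero_left a f hf0, lmul_zero_right a f,
    fun p => (bijective_lmul_left a f p).existsUnique,
    fun p => (bijective_lmul_right a f p).existsUnique⟩

theorem lmul_is_loop (a : ℝ) (ha : a ≠ 0) (f : ℝ × ℝ → ℝ)
    (hf : Continuous f) (hf0 : f (0, 0) = 0) :
    (∀ p : ℝ × ℝ × ℝ, lmul a f ((0,0,0) : ℝ × ℝ × ℝ) p = p) ∧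
    (∀ p : ℝ × ℝ × ℝ, lmul a f p ((0,0,0) : ℝ × ℝ × ℝ) = p) ∧
    (∀ p b : ℝ × ℝ × ℝ, ∃! y : ℝ × ℝ × ℝ, lmul a f p y = b) ∧
    (∀ p b : ℝ × ℝ × ℝ, ∃! x : ℝ × ℝ × ℝ, lmul a f x p = b) :=
  lmul_is_loop_general a f hf0
end

section
/- Fix a ∈ ℝ, a ≠ 0, and let G be the matrix group of all g(x₁,x₂,x₃,x₄) with g as above, and H₁ = { g(0,0,k,0) : k ∈ ℝ }. Then every element of G has a unique decomposition g(x,y,0,z)·g(0,0,k,0) with x,y,z,k ∈ ℝ; i.e. the set { g(x,y,0,z) : x,y,z ∈ ℝ } is a transversal of the left cosets of H₁ in G. -/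
/-! Writing `M = g(x₁,x₂,x₃,x₄)`, the product `g(x,y,0,z) · g(0,0,k,0)` equals
`g(x, y + z eᶻ k, eᶻ k, z)`, so the decomposition exists and is unique exactly because the
coordinates of `g` are determined by the matrix: `z = x₄`, `k = e^{-x₄} x₃`, `x = x₁` and
`y = x₂ - x₄ x₃`. -/

open Real

lemma g_mul_g_zero_zero (a x y z k : ℝ) :
    g a x y 0 z * g a 0 0 k 0 = g a x (y + z * exp z * k) (exp z * k) z := by
  ext i j
  fin_cases i, j <;> simp [g, Matrix.mul_apply, Fin.sum_univ_four]
  ring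

lemma g_inj {a x₁ x₂ x₃ x₄ y₁ y₂ y₃ y₄ : ℝ} :
    g a x₁ x₂ x₃ x₄ = g a y₁ y₂ y₃ y₄ ↔ x₁ = y₁ ∧ x₂ = y₂ ∧ x₃ = y₃ ∧ x₄ = y₄ := by
  refine ⟨fun h ↦ ?_, by rintro ⟨rfl, rfl, rfl, rfl⟩; rfl⟩
  have entry (i j : Fin 4) := congrFun (congrFun h i) j
  have h₁ : x₁ = y₁ := by simpa [g] using entry 0 3
  have h₂ : x₂ = y₂ := by simpa [g] using entry 1 3
  have h₃ : x₃ = y₃ := by simpa [g] using entry 2 3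
  have h₄ : x₄ = y₄ := exp_injective (by simpa [g] using entry 1 1)
  exact ⟨h₁, h₂, h₃, h₄⟩

lemma g_eq_g_mul_g_zero_zero_iff {a x₁ x₂ x₃ x₄ x y z k : ℝ} :
    g a x₁ x₂ x₃ x₄ = g a x y 0 z * g a 0 0 k 0 ↔
      x = x₁ ∧ y = x₂ - x₄ * x₃ ∧ z = x₄ ∧ k = exp (-x₄) * x₃ := by
  have exp_mul_exp_neg : exp x₄ * exp (-x₄) = 1 := by rw [← exp_add, add_neg_cancel, exp_zero]
  rw [g_mul_g_zero_zero, g_inj]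
  constructor
  · rintro ⟨rfl, rfl, rfl, rfl⟩
    exact ⟨rfl, by ring, rfl, by linear_combination (-k) * exp_mul_exp_neg⟩
  · rintro ⟨rfl, rfl, rfl, rfl⟩
    exact ⟨rfl, by linear_combination (-z * x₃) * exp_mul_exp_neg,
      by linear_combination (-x₃) * exp_mul_exp_neg, rfl⟩

theorem unique_decomposition_H1_general (a : ℝ) :
    ∀ M ∈ {M | ∃ x₁ x₂ x₃ x₄ : ℝ, M = g a x₁ x₂ x₃ x₄},
      ∃! q : ℝ × ℝ × ℝ × ℝ,
        M = g a q.1 q.2.1 0 q.2.2.1 * g a 0 0 q.2.2.2 0 := by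
  rintro M ⟨x₁, x₂, x₃, x₄, rfl⟩
  refine ⟨(x₁, x₂ - x₄ * x₃, x₄, exp (-x₄) * x₃), g_eq_g_mul_g_zero_zero_iff.2 ⟨rfl, rfl, rfl, rfl⟩, ?_⟩
  rintro ⟨x, y, z, k⟩ h
  obtain ⟨hx, hy, hz, hk⟩ := g_eq_g_mul_g_zero_zero_iff.1 h
  exact Prod.ext hx (Prod.ext hy (Prod.ext hz hk))

theorem unique_decomposition_H1 (a : ℝ) (ha : a ≠ 0) :
    ∀ M ∈ {M | ∃ x₁ x₂ x₃ x₄ : ℝ, M = g a x₁ x₂ x₃ x₄},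
      ∃! q : ℝ × ℝ × ℝ × ℝ,
        M = g a q.1 q.2.1 0 q.2.2.1 * g a 0 0 q.2.2.2 0 :=
  unique_decomposition_H1_general a
end

section
/- Let L be a loop with multiplication group Mult(L) and inner mapping group Inn(L) (the stabilizer of the identity of L in Mult(L)). Then the normalizer of Inn(L) in Mult(L) equals the internal direct product Inn(L) × Z(Mult(L)), where Z(Mult(L)) is the center of Mult(L). In particular Inn(L) ∩ Z(Mult(L)) = 1 and Z(Mult(L)) normalizes Inn(L). -/
/-- A loop: a binary system with two-sided identity whose left and right
translations are bijections (packaged as permutations). -/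
structure LoopStr (L : Type*) where
  mul : L → L → L
  one : L
  one_mul : ∀ x, mul one x = x
  mul_one : ∀ x, mul x one = x
  lperm : L → Equiv.Perm L
  rperm : L → Equiv.Perm L
  lperm_apply : ∀ a x, lperm a x = mul a x
  rperm_apply : ∀ a x, rperm a x = mul x a

/-- The multiplication group: the permutation group generated by all left and
right translations. -/
def LoopStr.Mult {L : Type*} (Q : LoopStr L) : Subgroup (Equiv.Perm L) :=
  Subgroup.closure (Set.range Q.lperm ∪ Set.range Q.rperm)

/-- The inner mapping group: the stabilizer of the identity in Mult(L). -/
def LoopStr.Inn {L : Type*} (Q : LoopStr L) : Subgroup Q.Mult where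
  carrier := {φ | (φ : Equiv.Perm L) Q.one = Q.one}
  one_mem' := rfl
  mul_mem' := by
    intro x y hx hy
    simp only [Set.mem_setOf_eq] at *
    simp [Equiv.Perm.mul_apply, hy, hx]
  inv_mem' := by
    intro x hx
    simp only [Set.mem_setOf_eq] at *
    have : ((x : Equiv.Perm L)).symm Q.one = Q.one := (Equiv.symm_apply_eq _).mpr hx.symm
    simpa using this



/-! An element `θ` of the normalizer of `Inn(L)` conjugates inner maps to inner maps, so every
inner map fixes `c = θ 1`. Comparing mappings of `Mult(L)` that agree at `1` (such as `L_a` and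
`R_a`, or `L_a L_b` and `L_{ab}`) then shows that `c` commutes and associates with everything,
hence `L_c` is central in `Mult(L)`; and `L_c⁻¹ θ` fixes `1`, so `θ ∈ Inn(L) · Z(Mult(L))`.
Conversely a central `z` satisfies `z a = z (L_a 1) = a · z 1`, so it is trivial as soon as it
fixes `1`. -/

namespace LoopStr

variable {L : Type*} (Q : LoopStr L)

def lmult (a : L) : Q.Mult := ⟨Q.lperm a, Subgroup.subset_closure (Or.inl ⟨a, rfl⟩)⟩

def rmult (a : L) : Q.Mult := ⟨Q.rperm a, Subgroup.subset_closure (Or.inr ⟨a, rfl⟩)⟩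

@[simp]
lemma lmult_apply (a x : L) : (Q.lmult a : Equiv.Perm L) x = Q.mul a x := Q.lperm_apply a x

@[simp]
lemma rmult_apply (a x : L) : (Q.rmult a : Equiv.Perm L) x = Q.mul x a := Q.rperm_apply a x

lemma inv_mul_mem_inn_iff {φ ψ : Q.Mult} :
    ψ⁻¹ * φ ∈ Q.Inn ↔ (φ : Equiv.Perm L) Q.one = (ψ : Equiv.Perm L) Q.one :=
  Equiv.symm_apply_eq _

variable {Q}

lemma apply_eq_of_apply_one_eq {c : L} (hc : ∀ h ∈ Q.Inn, (h : Equiv.Perm L) c = c)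
    {φ ψ : Q.Mult} (h : (φ : Equiv.Perm L) Q.one = (ψ : Equiv.Perm L) Q.one) :
    (φ : Equiv.Perm L) c = (ψ : Equiv.Perm L) c :=
  (Equiv.symm_apply_eq _).mp (hc _ ((Q.inv_mul_mem_inn_iff).mpr h))

lemma mul_comm_of_forall_inn_fixed {c : L} (hc : ∀ h ∈ Q.Inn, (h : Equiv.Perm L) c = c)
    (a : L) : Q.mul a c = Q.mul c a := by
  simpa using apply_eq_of_apply_one_eq hc (φ := Q.lmult a) (ψ := Q.rmult a)
    (by simp [Q.one_mul, Q.mul_one])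

lemma mul_mul_assoc_of_forall_inn_fixed {c : L} (hc : ∀ h ∈ Q.Inn, (h : Equiv.Perm L) c = c)
    (a b : L) : Q.mul a (Q.mul b c) = Q.mul (Q.mul a b) c := by
  simpa using apply_eq_of_apply_one_eq hc (φ := Q.lmult a * Q.lmult b)
    (ψ := Q.lmult (Q.mul a b)) (by simp [Q.mul_one])

lemma mul_assoc_of_forall_inn_fixed {c : L} (hc : ∀ h ∈ Q.Inn, (h : Equiv.Perm L) c = c)
    (a b : L) : Q.mul (Q.mul c a) b = Q.mul c (Q.mul a b) := by
  simpa using apply_eq_of_apply_one_eq hc (φ := Q.rmult b * Q.rmult a)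
    (ψ := Q.rmult (Q.mul a b)) (by simp [Q.one_mul])

lemma mult_le_centralizer_lperm_of_forall_inn_fixed {c : L}
    (hc : ∀ h ∈ Q.Inn, (h : Equiv.Perm L) c = c) :
    Q.Mult ≤ Subgroup.centralizer {Q.lperm c} := by
  rw [LoopStr.Mult, Subgroup.closure_le]
  rintro _ (⟨a, rfl⟩ | ⟨a, rfl⟩) <;>
    rw [SetLike.mem_coe, Subgroup.mem_centralizer_singleton_iff] <;> ext x <;>
    simp only [Equiv.Perm.mul_apply, Q.lperm_apply, Q.rperm_apply]
  · rw [← mul_comm_of_forall_inn_fixed hc x, mul_mul_assoc_of_forall_inn_fixed hc,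
      mul_comm_of_forall_inn_fixed hc]
  · exact mul_assoc_of_forall_inn_fixed hc x a

lemma lmult_mem_center_of_forall_inn_fixed {c : L}
    (hc : ∀ h ∈ Q.Inn, (h : Equiv.Perm L) c = c) :
    Q.lmult c ∈ Subgroup.center Q.Mult :=
  Subgroup.mem_center_iff.mpr fun g =>
    Subtype.ext (Subgroup.mem_centralizer_singleton_iff.mp
      (mult_le_centralizer_lperm_of_forall_inn_fixed hc g.2))

lemma forall_inn_fixed_of_mem_normalizer {θ : Q.Mult}
    (hθ : θ ∈ Subgroup.normalizer (Q.Inn : Set Q.Mult)) :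
    ∀ h ∈ Q.Inn,
      (h : Equiv.Perm L) ((θ : Equiv.Perm L) Q.one) = (θ : Equiv.Perm L) Q.one := fun h hh =>
  have hconj : θ⁻¹ * h * θ ∈ Q.Inn := (Subgroup.mem_normalizer_iff''.mp hθ h).mp hh
  (Equiv.symm_apply_eq _).mp hconj

lemma normalizer_inn_le_sup_center :
    Subgroup.normalizer (Q.Inn : Set Q.Mult) ≤ Q.Inn ⊔ Subgroup.center Q.Mult := by
  intro θ hθ
  set z := Q.lmult ((θ : Equiv.Perm L) Q.one)
  have hz : z ∈ Subgroup.center Q.Mult :=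
    lmult_mem_center_of_forall_inn_fixed (forall_inn_fixed_of_mem_normalizer hθ)
  have hinn : z⁻¹ * θ ∈ Q.Inn := (Q.inv_mul_mem_inn_iff).mpr (by simp [z, Q.mul_one])
  rw [← mul_inv_cancel_left z θ, sup_comm]
  exact Subgroup.mul_mem_sup hz hinn

lemma eq_one_of_mem_center_of_apply_one {z : Q.Mult} (hz : z ∈ Subgroup.center Q.Mult)
    (h1 : (z : Equiv.Perm L) Q.one = Q.one) : z = 1 := by
  ext a
  have hcomm := congrArg (fun g : Q.Mult => (g : Equiv.Perm L) Q.one)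
    (Subgroup.mem_center_iff.mp hz (Q.lmult a))
  simpa [h1, Q.mul_one] using hcomm.symm

lemma inn_inf_center_eq_bot : Q.Inn ⊓ Subgroup.center Q.Mult = ⊥ :=
  (Subgroup.eq_bot_iff_forall _).mpr fun _ hz => eq_one_of_mem_center_of_apply_one hz.2 hz.1

end LoopStr

theorem normalizer_Inn (L : Type*) (Q : LoopStr L) :
    Subgroup.normalizer (Q.Inn : Set ↥Q.Mult) = Q.Inn ⊔ Subgroup.center ↥Q.Mult ∧
    Q.Inn ⊓ Subgroup.center ↥Q.Mult = ⊥ ∧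
    Subgroup.center ↥Q.Mult ≤ Subgroup.normalizer (Q.Inn : Set ↥Q.Mult) :=
  have hcenter := Subgroup.center_le_normalizer (Q.Inn : Set Q.Mult)
  ⟨le_antisymm LoopStr.normalizer_inn_le_sup_center (sup_le Subgroup.le_normalizer hcenter),
    LoopStr.inn_inf_center_eq_bot, hcenter⟩
end
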